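/- With the notation of the IPM dual problem, the Hessian of the dual objective L(λ) = ⟨s_*(λᵀφ)⟩ − Σ_i λ_iᵀ û_i with respect to λ is H(λ) = ⟨∇u_s(λᵀφ) ⊗ φφᵀ⟩, and if ∇u_s (the Hessian of s_*) is positive definite everywhere and the basis functions φ_1,…,φ_N are linearly independent in L², then H(λ) is symmetric positive definite; hence L is strictly convex. -/

import Mathlib

/-!
Along a line `t ↦ y + t (x - y)` the second derivative of `s_*` is the quadratic form of the
positive definite `∇u_s`, so `s_*` is strictly convex. Integrating the strict convexity gap of
`s_*` at `λᵀφ(ξ)` gives strict convexity of `L`, and integrating the quadratic form of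
`∇u_s(λᵀφ) ⊗ φφᵀ` gives positive definiteness of `H(λ)`: in both cases the integrand is
nonnegative and positive wherever `cᵀφ(ξ) ≠ 0` for some nonzero coefficient matrix `c`, which
by linear independence of the `φ_i` in `L²` happens on a set of positive measure.
-/

open MeasureTheory Finset Matrix Set

theorem strictConvexOn_univ_of_lines {E : Type*} [AddCommGroup E] [Module ℝ E] {f : E → ℝ}
    (h : ∀ x y : E, x ≠ y → StrictConvexOn ℝ univ fun t : ℝ => f (y + t • (x - y))) :
    StrictConvexOn ℝ univ f := by
  refine ⟨convex_univ, fun x _ y _ hxy a b ha hb hab => ?_⟩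
  have key := (h x y hxy).2 (mem_univ 1) (mem_univ 0) one_ne_zero ha hb hab
  obtain rfl : b = 1 - a := by linarith
  have hline : y + a • (x - y) = a • x + (1 - a) • y := by module
  simpa [hline] using key

theorem strictConvexOn_univ_of_hessian_posDef {ι : Type*} [Fintype ι]
    {f : (ι → ℝ) → ℝ} {g : (ι → ℝ) → ι → ℝ} {H : (ι → ℝ) → Matrix ι ι ℝ}
    (hf : ∀ v, ∃ D : (ι → ℝ) →L[ℝ] ℝ, HasFDerivAt f D v ∧ ∀ w, D w = g v ⬝ᵥ w)
    (hg : ∀ v, ∃ D : (ι → ℝ) →L[ℝ] ι → ℝ, HasFDerivAt g D v ∧ ∀ w, D w = H v *ᵥ w)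
    (hH : ∀ v, (H v).PosDef) :
    StrictConvexOn ℝ univ f := by
  refine strictConvexOn_univ_of_lines fun x y hxy => ?_
  set d := x - y
  have hγ : ∀ t : ℝ, HasDerivAt (fun t : ℝ => y + t • d) d t := fun t => by
    simpa using ((hasDerivAt_id t).smul_const d).const_add y
  have hf' : ∀ t : ℝ, HasDerivAt (fun t => f (y + t • d)) (g (y + t • d) ⬝ᵥ d) t := fun t => by
    obtain ⟨D, hD, hDg⟩ := hf (y + t • d)
    simpa only [hDg, Function.comp_def] using hD.comp_hasDerivAt t (hγ t)
  have hg' : ∀ t : ℝ, HasDerivAt (fun t => g (y + t • d) ⬝ᵥ d)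
      ((H (y + t • d) *ᵥ d) ⬝ᵥ d) t := fun t => by
    obtain ⟨D, hD, hDH⟩ := hg (y + t • d)
    have hcomp := hasDerivAt_pi.1 (hD.comp_hasDerivAt t (hγ t))
    rw [← hDH]
    exact HasDerivAt.fun_sum fun j _ => (hcomp j).mul_const (d j)
  refine StrictMono.strictConvexOn_univ_of_deriv
    (continuous_iff_continuousAt.2 fun t => (hf' t).continuousAt) ?_
  rw [funext fun t => (hf' t).deriv]
  refine strictMono_of_hasDerivAt_pos hg' fun t => ?_
  have hpos := (hH (y + t • d)).dotProduct_mulVec_pos (show d ≠ 0 from sub_ne_zero.2 hxy)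
  rwa [star_trivial, dotProduct_comm] at hpos

section TransposeMulVec

variable {n ι : Type*} [Fintype n]

/-- `λ ↦ λᵀ v`; at `v = φ ξ` this is the argument `λᵀφ(ξ)` of `s_*`. -/
def transposeMulVecLin (v : n → ℝ) : (n → ι → ℝ) →ₗ[ℝ] ι → ℝ where
  toFun lam j := ∑ i, lam i j * v i
  map_add' lam lam' := by ext j; simp only [Pi.add_apply, add_mul, sum_add_distrib]
  map_smul' c lam := by
    ext j; simp only [Pi.smul_apply, smul_eq_mul, mul_assoc, mul_sum, RingHom.id_apply]

theorem transposeMulVecLin_apply (v : n → ℝ) (lam : n → ι → ℝ) (j : ι) :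
    transposeMulVecLin v lam j = ∑ i, lam i j * v i := rfl

theorem dotProduct_kronecker_mulVec [Fintype ι] (D : Matrix ι ι ℝ) (v : n → ℝ) (x : n × ι → ℝ) :
    x ⬝ᵥ (Matrix.of (fun p q : n × ι => D p.2 q.2 * v p.1 * v q.1) *ᵥ x) =
      transposeMulVecLin v (Function.curry x) ⬝ᵥ
        (D *ᵥ transposeMulVecLin v (Function.curry x)) := by
  simp only [dotProduct, mulVec, of_apply, transposeMulVecLin_apply, Function.curry_apply,
    Fintype.sum_prod_type, mul_sum, sum_mul]
  rw [sum_comm]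
  refine sum_congr rfl fun j _ => ?_
  rw [sum_comm]
  conv_rhs => rw [sum_comm]
  refine sum_congr rfl fun i' _ => ?_
  rw [sum_comm]
  exact sum_congr rfl fun k _ => sum_congr rfl fun i _ => by ring

end TransposeMulVec

section Integral

variable {Θ : Type*} [MeasurableSpace Θ] {μ : Measure Θ}

theorem integral_pos_of_frequently_pos {f : Θ → ℝ} (hf : 0 ≤ f) (hfi : Integrable f μ)
    (h : ∃ᵐ ξ ∂μ, 0 < f ξ) : 0 < ∫ ξ, f ξ ∂μ := by
  rw [integral_pos_iff_support_of_nonneg hf hfi]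
  exact (pos_iff_ne_zero.2 (frequently_ae_iff.1 h)).trans_le
    (measure_mono fun ξ hξ => (show 0 < f ξ from hξ).ne')

theorem StrictConvexOn.integral_comp_linearMap {V E : Type*} [AddCommGroup V] [Module ℝ V]
    [AddCommGroup E] [Module ℝ E] {g : E → ℝ} (hg : StrictConvexOn ℝ univ g)
    (A : Θ → V →ₗ[ℝ] E) (hA : ∀ v ≠ 0, ∃ᵐ ξ ∂μ, A ξ v ≠ 0)
    (hint : ∀ v, Integrable (fun ξ => g (A ξ v)) μ) :
    StrictConvexOn ℝ univ fun v => ∫ ξ, g (A ξ v) ∂μ := by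
  refine ⟨convex_univ, fun x _ y _ hxy a b ha hb hab => ?_⟩
  set gap : Θ → ℝ := fun ξ => a * g (A ξ x) + b * g (A ξ y) - g (A ξ (a • x + b • y))
  have hgap_pos : ∀ ξ, A ξ x ≠ A ξ y → 0 < gap ξ := fun ξ hne => by
    have := hg.2 (mem_univ _) (mem_univ _) hne ha hb hab
    simp only [smul_eq_mul] at this
    simp only [gap, map_add, map_smul]
    linarith
  have hgap_nonneg : 0 ≤ gap := fun ξ => by
    by_cases hne : A ξ x = A ξ y
    · simp only [gap, map_add, map_smul, hne, ← add_smul, ← add_mul, hab, one_smul, one_mul,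
        sub_self, Pi.zero_apply, le_refl]
    · exact (hgap_pos ξ hne).le
  have hint_comb : Integrable (fun ξ => a * g (A ξ x) + b * g (A ξ y)) μ :=
    ((hint x).const_mul a).add ((hint y).const_mul b)
  have hint_gap : Integrable gap μ := hint_comb.sub (hint _)
  have hfreq : ∃ᵐ ξ ∂μ, 0 < gap ξ :=
    (hA _ (sub_ne_zero.2 hxy)).mono fun ξ hξ => hgap_pos ξ (by rwa [map_sub, sub_ne_zero] at hξ)
  have := integral_pos_of_frequently_pos hgap_nonneg hint_gap hfreq
  rw [integral_sub hint_comb (hint _),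
    integral_add ((hint x).const_mul a) ((hint y).const_mul b),
    integral_const_mul, integral_const_mul] at this
  simp only [smul_eq_mul]
  linarith

section QuadraticForm

variable {κ : Type*} [Fintype κ] {M : Θ → Matrix κ κ ℝ}

theorem integrable_dotProduct_mulVec (hM : ∀ p q, Integrable (fun ξ => M ξ p q) μ) (x y : κ → ℝ) :
    Integrable (fun ξ => x ⬝ᵥ (M ξ *ᵥ y)) μ :=
  integrable_finsetSum _ fun p _ => (integrable_finsetSum _ fun q _ =>
    (hM p q).mul_const (y q)).const_mul (x p)

theorem dotProduct_mulVec_integral (hM : ∀ p q, Integrable (fun ξ => M ξ p q) μ) (x y : κ → ℝ) :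
    x ⬝ᵥ (Matrix.of (fun p q => ∫ ξ, M ξ p q ∂μ) *ᵥ y) = ∫ ξ, x ⬝ᵥ (M ξ *ᵥ y) ∂μ := by
  simp only [dotProduct, mulVec, of_apply]
  rw [integral_finsetSum _ fun p _ => (integrable_finsetSum _ fun q _ =>
    (hM p q).mul_const (y q)).const_mul (x p)]
  refine sum_congr rfl fun p _ => ?_
  rw [integral_const_mul, integral_finsetSum _ fun q _ => (hM p q).mul_const (y q)]
  simp only [integral_mul_const]

end QuadraticForm

variable {n ι : Type*} [Fintype n] {φ : Θ → n → ℝ}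

theorem frequently_transposeMulVecLin_ne_zero
    (hindep : ∀ c : n → ℝ, (∀ᵐ ξ ∂μ, c ⬝ᵥ φ ξ = 0) → c = 0) {lam : n → ι → ℝ} (hlam : lam ≠ 0) :
    ∃ᵐ ξ ∂μ, transposeMulVecLin (φ ξ) lam ≠ 0 := by
  refine Filter.not_eventually.1 fun h => hlam ?_
  funext i j
  have hcol := hindep (fun i => lam i j) (h.mono fun ξ hξ => congrFun hξ j)
  exact congrFun hcol i

theorem posDef_integral_kronecker [Fintype ι] (D : Θ → Matrix ι ι ℝ) (hD : ∀ ξ, (D ξ).PosDef)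
    (hindep : ∀ c : n → ℝ, (∀ᵐ ξ ∂μ, c ⬝ᵥ φ ξ = 0) → c = 0)
    (hint : ∀ p q : n × ι, Integrable (fun ξ => D ξ p.2 q.2 * φ ξ p.1 * φ ξ q.1) μ) :
    (Matrix.of fun p q : n × ι => ∫ ξ, D ξ p.2 q.2 * φ ξ p.1 * φ ξ q.1 ∂μ).PosDef := by
  refine PosDef.of_dotProduct_mulVec_pos ?_ fun x hx => ?_
  · ext p q
    refine integral_congr_ae (Filter.Eventually.of_forall fun ξ => ?_)
    have hsymm := (hD ξ).isHermitian.apply p.2 q.2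
    rw [star_trivial] at hsymm
    simp only [hsymm]
    ring
  · set w : Θ → ι → ℝ := fun ξ => transposeMulVecLin (φ ξ) (Function.curry x)
    have hquad : ∀ ξ, x ⬝ᵥ (Matrix.of (fun p q : n × ι => D ξ p.2 q.2 * φ ξ p.1 * φ ξ q.1) *ᵥ x)
        = w ξ ⬝ᵥ (D ξ *ᵥ w ξ) := fun ξ => dotProduct_kronecker_mulVec (D ξ) (φ ξ) x
    rw [star_trivial, dotProduct_mulVec_integral hint]
    refine (integral_pos_of_frequently_pos (fun ξ => ?_) ?_ ?_).trans_eq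
      (integral_congr_ae (Filter.Eventually.of_forall hquad)).symm
    · simpa using (hD ξ).posSemidef.dotProduct_mulVec_nonneg (w ξ)
    · exact (integrable_dotProduct_mulVec hint x x).congr (Filter.Eventually.of_forall hquad)
    · have hx' : Function.curry x ≠ 0 := fun h => hx (funext fun p => congrFun (congrFun h p.1) p.2)
      refine (frequently_transposeMulVecLin_ne_zero hindep hx').mono fun ξ hξ => ?_
      simpa using (hD ξ).dotProduct_mulVec_pos hξ

end Integral

theorem stmt_6_general {N m : ℕ} {Θ : Type*} [MeasurableSpace Θ] (μ : Measure Θ)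
    (φ : Θ → Fin N → ℝ)
    (sstar : (Fin m → ℝ) → ℝ) (us : (Fin m → ℝ) → Fin m → ℝ)
    (Dus : (Fin m → ℝ) → Matrix (Fin m) (Fin m) ℝ) (uhat : Fin N → Fin m → ℝ)
    (hgrad : ∀ v, ∃ D : (Fin m → ℝ) →L[ℝ] ℝ, HasFDerivAt sstar D v ∧
      ∀ w, D w = ∑ j, us v j * w j)
    (hhess : ∀ v, ∃ D : (Fin m → ℝ) →L[ℝ] (Fin m → ℝ), HasFDerivAt us D v ∧
      ∀ w j, D w j = ∑ k, Dus v j k * w k)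
    (hpos : ∀ v, (Dus v).PosDef)
    (hindep : ∀ c : Fin N → ℝ, (∀ᵐ ξ ∂μ, ∑ i, c i * φ ξ i = 0) → c = 0)
    (hIntS : ∀ lam : Fin N → Fin m → ℝ,
      Integrable (fun ξ => sstar (fun j => ∑ i, lam i j * φ ξ i)) μ)
    (hIntH : ∀ (lam : Fin N → Fin m → ℝ) (p q : Fin N × Fin m),
      Integrable (fun ξ =>
        Dus (fun j => ∑ i, lam i j * φ ξ i) p.2 q.2 * φ ξ p.1 * φ ξ q.1) μ) :
    ∀ lam : Fin N → Fin m → ℝ,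
      (Matrix.of (fun p q : Fin N × Fin m =>
          ∫ ξ, Dus (fun j => ∑ i, lam i j * φ ξ i) p.2 q.2 * φ ξ p.1 * φ ξ q.1 ∂μ)).PosDef ∧
      StrictConvexOn ℝ Set.univ (fun lam' : Fin N → Fin m → ℝ =>
        (∫ ξ, sstar (fun j => ∑ i, lam' i j * φ ξ i) ∂μ)
          - ∑ i, ∑ j, lam' i j * uhat i j) := by
  intro lam
  refine ⟨posDef_integral_kronecker (fun ξ => Dus (fun j => ∑ i, lam i j * φ ξ i))
    (fun _ => hpos _) hindep (hIntH lam), ?_⟩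
  have hsstar : StrictConvexOn ℝ univ sstar :=
    strictConvexOn_univ_of_hessian_posDef hgrad (fun v => (hhess v).imp fun D hD =>
      ⟨hD.1, fun w => funext (hD.2 w)⟩) hpos
  have hpairing : ConcaveOn ℝ univ fun lam' : Fin N → Fin m → ℝ => ∑ i, ∑ j, lam' i j * uhat i j :=
    LinearMap.concaveOn (E := Fin N → Fin m → ℝ)
      { toFun := fun lam' => ∑ i, ∑ j, lam' i j * uhat i j
        map_add' := fun _ _ => by simp only [Pi.add_apply, add_mul, sum_add_distrib]
        map_smul' := fun _ _ => by
          simp only [Pi.smul_apply, smul_eq_mul, mul_assoc, mul_sum, RingHom.id_apply] }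
      convex_univ
  exact (hsstar.integral_comp_linearMap (fun ξ => transposeMulVecLin (φ ξ))
    (fun _ => frequently_transposeMulVecLin_ne_zero hindep) hIntS).sub_concaveOn hpairing

/-- The Hessian `H(λ) = ⟨∇u_s(λᵀφ) ⊗ φφᵀ⟩` of the IPM dual objective:
if `∇u_s` is positive definite everywhere and the basis functions are
linearly independent in `L²`, then `H(λ)` is symmetric positive definite,
and the dual objective `L` is strictly convex. -/
theorem stmt_6 {N m : ℕ} {Θ : Type*} [MeasurableSpace Θ] (μ : Measure Θ)
    [IsProbabilityMeasure μ]
    (φ : Θ → Fin N → ℝ) (hφmeas : ∀ i, Measurable fun ξ => φ ξ i)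
    (sstar : (Fin m → ℝ) → ℝ) (us : (Fin m → ℝ) → Fin m → ℝ)
    (Dus : (Fin m → ℝ) → Matrix (Fin m) (Fin m) ℝ) (uhat : Fin N → Fin m → ℝ)
    (hgrad : ∀ v, ∃ D : (Fin m → ℝ) →L[ℝ] ℝ, HasFDerivAt sstar D v ∧
      ∀ w, D w = ∑ j, us v j * w j)
    (hhess : ∀ v, ∃ D : (Fin m → ℝ) →L[ℝ] (Fin m → ℝ), HasFDerivAt us D v ∧
      ∀ w j, D w j = ∑ k, Dus v j k * w k)
    (hpos : ∀ v, (Dus v).PosDef)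
    (hindep : ∀ c : Fin N → ℝ, (∀ᵐ ξ ∂μ, ∑ i, c i * φ ξ i = 0) → c = 0)
    (hIntS : ∀ lam : Fin N → Fin m → ℝ,
      Integrable (fun ξ => sstar (fun j => ∑ i, lam i j * φ ξ i)) μ)
    (hIntH : ∀ (lam : Fin N → Fin m → ℝ) (p q : Fin N × Fin m),
      Integrable (fun ξ =>
        Dus (fun j => ∑ i, lam i j * φ ξ i) p.2 q.2 * φ ξ p.1 * φ ξ q.1) μ) :
    ∀ lam : Fin N → Fin m → ℝ,
      (Matrix.of (fun p q : Fin N × Fin m =>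
          ∫ ξ, Dus (fun j => ∑ i, lam i j * φ ξ i) p.2 q.2 * φ ξ p.1 * φ ξ q.1 ∂μ)).PosDef ∧
      StrictConvexOn ℝ Set.univ (fun lam' : Fin N → Fin m → ℝ =>
        (∫ ξ, sstar (fun j => ∑ i, lam' i j * φ ξ i) ∂μ)
          - ∑ i, ∑ j, lam' i j * uhat i j) :=
  stmt_6_general μ φ sstar us Dus uhat hgrad hhess hpos hindep hIntS hIntH
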